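/- For every k, IR(NSD^k(Γ), Γ) = IR'(NSD^k(Γ), Γ): a profile σ ∈ NSD^k(Γ) satisfies u_i(σ) ≥ max_{σ'_i ∈ NSD_i^k} min_{τ ∈ NSD_{-i}^k} u_i(σ'_i, τ) for all i if and only if it satisfies the stronger condition u_i(σ) ≥ max_{σ'_i ∈ Σ_i} min_{τ ∈ NSD_{-i}^k} u_i(σ'_i, τ) for all i, where the max ranges over all strategies of the original game. -/

import Mathlib

/-!
Let `σ*` maximize `σ ↦ min_{τ ∈ NSD^k_{-i}} u_i(σ, τ)` over all of `Σ_i`. It survives every round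
`m ≤ k` of deletion: if `σ''` minimax dominated it with respect to `NSD^m_{-i} ⊇ NSD^k_{-i}`, then
`min_{NSD^k} u_i(σ'') ≥ min_{NSD^m} u_i(σ'') > max_{NSD^m} u_i(σ*) ≥ min_{NSD^k} u_i(σ*)`,
contradicting the choice of `σ*`. So the maximin value over `NSD^k_i` is already the one over `Σ_i`.
The inequalities need the opponent sets to be nonempty (an empty `sInf` is `0`); the same argument
at round `k` shows by induction that no `NSD^k_i` is ever empty.
-/

open Function

section
variable {ι : Type*} [DecidableEq ι] {S : ι → Type*}

noncomputable def minv (u : ι → (∀ j, S j) → ℝ) (i : ι) (T : Set (∀ j, S j)) (σ : S i) : ℝ :=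
  sInf ((fun τ => u i (Function.update τ i σ)) '' T)

noncomputable def maxv (u : ι → (∀ j, S j) → ℝ) (i : ι) (T : Set (∀ j, S j)) (σ : S i) : ℝ :=
  sSup ((fun τ => u i (Function.update τ i σ)) '' T)

/-- `σ'` minimax dominates `σ` for player `i` w.r.t. opponent profile set `T`. -/
def MMDomBy (u : ι → (∀ j, S j) → ℝ) (i : ι) (T : Set (∀ j, S j)) (σ σ' : S i) : Prop :=
  minv u i T σ' > maxv u i T σ

def MMDom (u : ι → (∀ j, S j) → ℝ) (i : ι) (T : Set (∀ j, S j)) (σ : S i) : Prop :=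
  ∃ σ' : S i, MMDomBy u i T σ σ'

/-- Opponent profiles of player `i` compatible with the product set `Z`. -/
def Opp (Z : ∀ j, Set (S j)) (i : ι) : Set (∀ j, S j) := {τ | ∀ j, j ≠ i → τ j ∈ Z j}

/-- Iterated deletion of minimax dominated strategies. -/
noncomputable def NSD (u : ι → (∀ j, S j) → ℝ) : ℕ → ∀ i, Set (S i)
  | 0, _ => Set.univ
  | (k+1), i => {σ ∈ NSD u k i | ¬ MMDom u i (Opp (NSD u k) i) σ}


/-- Individually rational profiles of the subgame restricted to the product set `Z`. -/
noncomputable def IRset {ι : Type*} [DecidableEq ι] {S : ι → Type*}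
    (u : ι → (∀ j, S j) → ℝ) (Z : ∀ j, Set (S j)) : Set (∀ j, S j) :=
  {σ | (∀ j, σ j ∈ Z j) ∧
    ∀ i, u i σ ≥ sSup ((fun σ' => minv u i (Opp Z i) σ') '' Z i)}

/-- The stronger notion where deviations range over all strategies of the original game. -/
noncomputable def IRset' {ι : Type*} [DecidableEq ι] {S : ι → Type*}
    (u : ι → (∀ j, S j) → ℝ) (Z : ∀ j, Set (S j)) : Set (∀ j, S j) :=
  {σ | (∀ j, σ j ∈ Z j) ∧
    ∀ i, u i σ ≥ sSup (Set.range fun σ' : S i => minv u i (Opp Z i) σ')}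

section

variable {ι : Type*} {S : ι → Type*}

lemma opp_mono {Z Z' : ∀ j, Set (S j)} (h : ∀ j, Z j ⊆ Z' j) (i : ι) :
    Opp Z i ⊆ Opp Z' i :=
  fun _ hτ j hj => h j (hτ j hj)

lemma opp_nonempty {Z : ∀ j, Set (S j)} (h : ∀ j, (Z j).Nonempty) (i : ι) :
    (Opp Z i).Nonempty :=
  ⟨fun j => (h j).some, fun j _ => (h j).some_mem⟩

variable [DecidableEq ι]

lemma nsd_antitone (u : ι → (∀ j, S j) → ℝ) : Antitone (NSD u) :=
  antitone_nat_of_succ_le fun _ _ _ hσ => hσ.1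

variable [Finite ι] [∀ i, Finite (S i)]

lemma minv_anti (u : ι → (∀ j, S j) → ℝ) (i : ι) {T T' : Set (∀ j, S j)}
    (hsub : T' ⊆ T) (hne : T'.Nonempty) (σ : S i) :
    minv u i T σ ≤ minv u i T' σ :=
  csInf_le_csInf (Set.toFinite _).bddBelow (hne.image _) (Set.image_mono hsub)

lemma minv_le_maxv (u : ι → (∀ j, S j) → ℝ) (i : ι) {T T' : Set (∀ j, S j)}
    (hsub : T' ⊆ T) (hne : T'.Nonempty) (σ : S i) :
    minv u i T' σ ≤ maxv u i T σ := by
  obtain ⟨τ, hτ⟩ := hne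
  calc minv u i T' σ ≤ u i (update τ i σ) := csInf_le (Set.toFinite _).bddBelow ⟨τ, hτ, rfl⟩
    _ ≤ maxv u i T σ := le_csSup (Set.toFinite _).bddAbove ⟨τ, hsub hτ, rfl⟩

lemma not_mmDom_of_forall_minv_le (u : ι → (∀ j, S j) → ℝ) (i : ι) {T T' : Set (∀ j, S j)}
    (hsub : T' ⊆ T) (hne : T'.Nonempty) {σ : S i} (hmax : ∀ σ', minv u i T' σ' ≤ minv u i T' σ) :
    ¬ MMDom u i T σ := by
  rintro ⟨σ', hdom⟩
  have : minv u i T σ' ≤ maxv u i T σ :=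
    calc minv u i T σ' ≤ minv u i T' σ' := minv_anti u i hsub hne σ'
      _ ≤ minv u i T' σ := hmax σ'
      _ ≤ maxv u i T σ := minv_le_maxv u i hsub hne σ
  exact this.not_gt hdom

lemma mem_nsd_succ_of_forall_minv_le (u : ι → (∀ j, S j) → ℝ) {K : ℕ}
    (hK : ∀ j, (NSD u K j).Nonempty) {i : ι} {σ : S i}
    (hmax : ∀ σ', minv u i (Opp (NSD u K) i) σ' ≤ minv u i (Opp (NSD u K) i) σ) :
    σ ∈ NSD u (K + 1) i := by
  suffices ∀ m ≤ K + 1, σ ∈ NSD u m i from this _ le_rfl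
  intro m
  induction m with
  | zero => exact fun _ => Set.mem_univ σ
  | succ m ih =>
    intro hm
    have hsub : Opp (NSD u K) i ⊆ Opp (NSD u m) i :=
      opp_mono (fun j => nsd_antitone u (by omega : m ≤ K) j) i
    exact ⟨ih (by omega), not_mmDom_of_forall_minv_le u i hsub (opp_nonempty hK i) hmax⟩

variable [∀ i, Nonempty (S i)]

lemma nsd_nonempty (u : ι → (∀ j, S j) → ℝ) (K : ℕ) (j : ι) : (NSD u K j).Nonempty := by
  induction K generalizing j with
  | zero => exact Set.univ_nonempty
  | succ K ih =>
    obtain ⟨σ, hmax⟩ := Finite.exists_max fun σ' : S j => minv u j (Opp (NSD u K) j) σ'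
    exact ⟨σ, mem_nsd_succ_of_forall_minv_le u ih hmax⟩

end

lemma csSup_image_eq_csSup_range_of_forall_le {α β : Type*} [ConditionallyCompleteLattice β]
    {f : α → β} {s : Set α} {a : α} (ha : a ∈ s) (hmax : ∀ x, f x ≤ f a) :
    sSup (f '' s) = sSup (Set.range f) :=
  have hs : IsGreatest (f '' s) (f a) := ⟨⟨a, ha, rfl⟩, by rintro _ ⟨x, -, rfl⟩; exact hmax x⟩
  have hr : IsGreatest (Set.range f) (f a) := ⟨⟨a, rfl⟩, by rintro _ ⟨x, rfl⟩; exact hmax x⟩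
  hs.csSup_eq.trans hr.csSup_eq.symm

variable {ι : Type*} [Fintype ι] [DecidableEq ι] {S : ι → Type*}
  [∀ i, Fintype (S i)] [∀ i, Nonempty (S i)]

theorem irset_eq_irset' (u : ι → (∀ j, S j) → ℝ) (k : ℕ) :
    IRset u (NSD u k) = IRset' u (NSD u k) := by
  have hsup : ∀ i, sSup ((fun σ' => minv u i (Opp (NSD u k) i) σ') '' NSD u k i) =
      sSup (Set.range fun σ' : S i => minv u i (Opp (NSD u k) i) σ') := by
    intro i
    obtain ⟨σ, hmax⟩ := Finite.exists_max fun σ' : S i => minv u i (Opp (NSD u k) i) σ'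
    have hσ : σ ∈ NSD u k i :=
      nsd_antitone u k.le_succ i (mem_nsd_succ_of_forall_minv_le u (nsd_nonempty u k) hmax)
    exact csSup_image_eq_csSup_range_of_forall_le hσ hmax
  ext σ
  simp only [IRset, IRset', Set.mem_ofPred_eq, hsup]

end
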